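/- Let X be a random variable with distribution P_X on a finite set 𝒳 and let F be a two-universal random predicate on 𝒳 independent of X. Then for every family {ρ_x}_{x∈𝒳} of density matrices on ℂ^d, d(F(X)|⟨ρ_X,F⟩) ≤ (1/2)·√d·√( Σ_{x∈𝒳} P_X(x)² ). -/

import Mathlib

open Finset ComplexOrder

/-!
Fix a predicate `f` and put `Δ_f = ∑_x P_X(x) s(f x) ρ_x` with signs `s(true) = 1`,
`s(false) = -1`. For a POVM `{E_w}`, `tr(E_w Δ_f) = P(f(X) = 1, W = w) - P(f(X) = 0, W = w)`, so
`d(f(X)|W) = ½ ∑_w |tr(E_w Δ_f)|`; this is at most half the trace norm `∑_i |λ_i(Δ_f)|`, hence by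
Cauchy–Schwarz at most `½ √d √tr(Δ_f²)`. By concavity of `√` it remains to bound
`E_F tr(Δ_F²) = ∑_{x,y} P_X(x) P_X(y) tr(ρ_x ρ_y) E[s(F x) s(F y)]`. The diagonal terms are at
most `P_X(x)²` because `tr ρ_x² ≤ (tr ρ_x)² = 1`; off the diagonal `tr(ρ_x ρ_y) ≥ 0`, and
two-universality says exactly that `E[s(F x) s(F y)] = 2 Pr[F x = F y] - 1 ≤ 0`.
-/

/-- The distance of a distribution `P` on a finite set `Z` from the uniform
distribution: `d(P) = (1/2) ∑_z |P z - 1/|Z||`. -/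
noncomputable def distUnif {Z : Type*} [Fintype Z] (P : Z → ℝ) : ℝ :=
  (1 / 2) * ∑ z, |P z - 1 / (Fintype.card Z : ℝ)|

/-- For a joint distribution `P` on `W × Z` (given as `P : W → Z → ℝ`), the expected
distance of `Z` from uniform given `W`: `d(Z|W) = ∑_w P_W(w) · d(P_{Z|W=w})`. -/
noncomputable def dCond {W Z : Type*} [Fintype W] [Fintype Z] (P : W → Z → ℝ) : ℝ :=
  ∑ w, (∑ z, P w z) * distUnif (fun z => P w z / ∑ z', P w z')

/-- A POVM on `ℂ^d` with an arbitrary finite outcome set: a family `{E_w}` of positive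
semidefinite `d×d` complex matrices summing to the identity. -/
structure POVM (d : ℕ) where
  ι : Type
  [fin : Fintype ι]
  E : ι → Matrix (Fin d) (Fin d) ℂ
  psd : ∀ w, (E w).PosSemidef
  sum_eq : ∑ w, E w = 1

attribute [instance] POVM.fin

/-- Given `X` with distribution `PX` on `𝒳`, a family `{ρ_x}` of density matrices on
`ℂ^d`, and a function `g : 𝒳 → 𝒵`, the distance of `g(X)` from uniform given `ρ_X`:
the supremum over all POVMs `{E_w}` (with arbitrary finite outcome sets) of
`d(g(X)|W)`, where `W` is the measurement outcome, with joint distribution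
`P_{X W}(x,w) = PX x · tr(E_w ρ_x)`. -/
noncomputable def dQuant {d : ℕ} {𝒳 𝒵 : Type} [Fintype 𝒳] [Fintype 𝒵] [DecidableEq 𝒵]
    (PX : 𝒳 → ℝ) (ρ : 𝒳 → Matrix (Fin d) (Fin d) ℂ) (g : 𝒳 → 𝒵) : ℝ :=
  sSup {r : ℝ | ∃ M : POVM d,
    r = dCond (fun (w : M.ι) (z : 𝒵) =>
      ∑ x ∈ univ.filter (fun x => g x = z), PX x * ((M.E w) * ρ x).trace.re)}

namespace Matrix

variable {n : Type*} [Fintype n] [DecidableEq n]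

lemma IsHermitian.trace_mul_eq_sum_eigenvalues_mul {A : Matrix n n ℂ} (hA : A.IsHermitian)
    (E : Matrix n n ℂ) :
    (E * A).trace = ∑ i, (hA.eigenvalues i : ℂ) *
      (star (hA.eigenvectorUnitary : Matrix n n ℂ) * E * hA.eigenvectorUnitary) i i := by
  conv_lhs => rw [hA.spectral_theorem, Unitary.conjStarAlgAut_apply, ← mul_assoc, ← mul_assoc,
    trace_mul_cycle, ← mul_assoc]
  simp [trace, mul_diagonal, mul_comm]

lemma IsHermitian.re_trace_mul_self_eq_sum_eigenvalues_sq {A : Matrix n n ℂ} (hA : A.IsHermitian) :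
    (A * A).trace.re = ∑ i, hA.eigenvalues i ^ 2 := by
  have hdiag := hA.conjStarAlgAut_star_eigenvectorUnitary
  rw [Unitary.conjStarAlgAut_star_apply] at hdiag
  simp [hA.trace_mul_eq_sum_eigenvalues_mul, hdiag, Complex.re_sum, pow_two]

lemma IsHermitian.re_trace_mul_self_nonneg {A : Matrix n n ℂ} (hA : A.IsHermitian) :
    0 ≤ (A * A).trace.re := by
  rw [hA.re_trace_mul_self_eq_sum_eigenvalues_sq]
  positivity

lemma PosSemidef.re_diag_conj_eigenvectorUnitary_nonneg {E : Matrix n n ℂ} (hE : E.PosSemidef)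
    {A : Matrix n n ℂ} (hA : A.IsHermitian) (i : n) :
    0 ≤ ((star (hA.eigenvectorUnitary : Matrix n n ℂ) * E * hA.eigenvectorUnitary) i i).re := by
  have hconj := hE.conjTranspose_mul_mul_same (hA.eigenvectorUnitary : Matrix n n ℂ)
  exact (Complex.nonneg_iff.mp (hconj.diag_nonneg (i := i))).1

lemma PosSemidef.re_trace_mul_nonneg {E A : Matrix n n ℂ} (hE : E.PosSemidef)
    (hA : A.PosSemidef) : 0 ≤ (E * A).trace.re := by
  rw [hA.1.trace_mul_eq_sum_eigenvalues_mul, Complex.re_sum]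
  exact sum_nonneg fun i _ => by
    rw [Complex.re_ofReal_mul]
    exact mul_nonneg (hA.eigenvalues_nonneg i) (hE.re_diag_conj_eigenvectorUnitary_nonneg hA.1 i)

lemma PosSemidef.re_trace_mul_self_le {A : Matrix n n ℂ} (hA : A.PosSemidef) :
    (A * A).trace.re ≤ A.trace.re ^ 2 := by
  rw [hA.1.re_trace_mul_self_eq_sum_eigenvalues_sq, hA.1.trace_eq_sum_eigenvalues]
  simpa [Complex.re_sum] using
    sum_sq_le_sq_sum_of_nonneg fun i _ => hA.eigenvalues_nonneg i

lemma IsHermitian.sum_abs_re_trace_mul_le_sum_abs_eigenvalues {ι : Type*} [Fintype ι]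
    {A : Matrix n n ℂ} (hA : A.IsHermitian) {E : ι → Matrix n n ℂ} (hE : ∀ w, (E w).PosSemidef)
    (hE1 : ∑ w, E w = 1) :
    ∑ w, |(E w * A).trace.re| ≤ ∑ i, |hA.eigenvalues i| := by
  set U : Matrix n n ℂ := (hA.eigenvectorUnitary : Matrix n n ℂ)
  have hU : star U * U = 1 := Unitary.coe_star_mul_self hA.eigenvectorUnitary
  have hdiag_sum (i : n) : ∑ w, ((star U * E w * U) i i).re = 1 := by
    rw [← Complex.re_sum, ← Matrix.sum_apply, ← sum_mul, ← mul_sum, hE1, mul_one, hU,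
      one_apply_eq, Complex.one_re]
  have hterm (w : ι) :
      |(E w * A).trace.re| ≤ ∑ i, |hA.eigenvalues i| * ((star U * E w * U) i i).re := by
    rw [hA.trace_mul_eq_sum_eigenvalues_mul, Complex.re_sum]
    refine (abs_sum_le_sum_abs _ _).trans (sum_le_sum fun i _ => ?_)
    rw [Complex.re_ofReal_mul, abs_mul,
      abs_of_nonneg ((hE w).re_diag_conj_eigenvectorUnitary_nonneg hA i)]
  calc ∑ w, |(E w * A).trace.re|
      ≤ ∑ w, ∑ i, |hA.eigenvalues i| * ((star U * E w * U) i i).re := sum_le_sum fun w _ => hterm w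
    _ = ∑ i, |hA.eigenvalues i| := by
      rw [sum_comm]; simp only [← mul_sum, hdiag_sum, mul_one]

lemma IsHermitian.sum_abs_eigenvalues_le_sqrt_card_mul {A : Matrix n n ℂ} (hA : A.IsHermitian) :
    ∑ i, |hA.eigenvalues i| ≤ √(Fintype.card n) * √((A * A).trace.re) := by
  simpa [hA.re_trace_mul_self_eq_sum_eigenvalues_sq] using
    Real.sum_mul_le_sqrt_mul_sqrt univ (fun _ => (1 : ℝ)) (fun i => |hA.eigenvalues i|)

end Matrix

lemma mul_distUnif_div_sum_bool {p : Bool → ℝ} (hp : ∀ z, 0 ≤ p z) :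
    (∑ z, p z) * distUnif (fun z => p z / ∑ z', p z') = |p true - p false| / 2 := by
  simp only [distUnif, Fintype.sum_bool, Fintype.card_bool, Nat.cast_ofNat]
  have ha := hp true
  have hb := hp false
  generalize p true = a at ha ⊢
  generalize p false = b at hb ⊢
  rcases (add_nonneg ha hb).eq_or_lt with hab | hab
  · obtain ⟨rfl, rfl⟩ := (add_eq_zero_iff_of_nonneg ha hb).mp hab.symm
    simp
  · have htrue : a / (a + b) - 1 / 2 = (a - b) / (2 * (a + b)) := by field_simp; ring
    have hfalse : b / (a + b) - 1 / 2 = -((a - b) / (2 * (a + b))) := by field_simp; ring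
    rw [htrue, hfalse, abs_neg, abs_div, abs_of_pos (by linarith : (0 : ℝ) < 2 * (a + b))]
    field_simp
    ring

lemma dCond_bool {W : Type*} [Fintype W] {P : W → Bool → ℝ} (hP : ∀ w z, 0 ≤ P w z) :
    dCond P = ∑ w, |P w true - P w false| / 2 :=
  sum_congr rfl fun w _ => mul_distUnif_div_sum_bool (hP w)

lemma sum_mul_sqrt_le_sqrt_sum_mul {ι : Type*} (s : Finset ι) {w q : ι → ℝ}
    (hw : ∀ i ∈ s, 0 ≤ w i) (hw1 : ∑ i ∈ s, w i = 1) (hq : ∀ i ∈ s, 0 ≤ q i) :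
    ∑ i ∈ s, w i * √(q i) ≤ √(∑ i ∈ s, w i * q i) :=
  Real.strictConcaveOn_sqrt.concaveOn.le_map_sum hw hw1 hq

section Hashing

variable {n 𝒳 : Type*} [Fintype 𝒳]

def boolSign (b : Bool) : ℝ := if b then 1 else -1

lemma boolSign_mul_boolSign (a b : Bool) :
    boolSign a * boolSign b = if a = b then 1 else -1 := by
  cases a <;> cases b <;> norm_num [boolSign]

noncomputable def biasOp (PX : 𝒳 → ℝ) (ρ : 𝒳 → Matrix n n ℂ) (f : 𝒳 → Bool) : Matrix n n ℂ :=
  ∑ x, (PX x * boolSign (f x)) • ρ x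

variable {PX : 𝒳 → ℝ} {ρ : 𝒳 → Matrix n n ℂ}

lemma isHermitian_biasOp (hρ : ∀ x, (ρ x).IsHermitian) (f : 𝒳 → Bool) :
    (biasOp PX ρ f).IsHermitian :=
  isSelfAdjoint_sum univ fun x _ => (hρ x).smul (IsSelfAdjoint.all _)

lemma re_trace_mul_biasOp [Fintype n] (E : Matrix n n ℂ) (f : 𝒳 → Bool) :
    (E * biasOp PX ρ f).trace.re =
      ∑ x ∈ univ.filter (fun x => f x = true), PX x * (E * ρ x).trace.re -
        ∑ x ∈ univ.filter (fun x => f x = false), PX x * (E * ρ x).trace.re := by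
  simp only [biasOp, mul_sum, Matrix.mul_smul, Matrix.trace_sum, Matrix.trace_smul, Complex.re_sum,
    Complex.smul_re, smul_eq_mul, boolSign, mul_ite, ite_mul, mul_one, mul_neg, neg_mul]
  rw [sum_ite, sum_neg_distrib, sub_eq_add_neg]
  simp

lemma re_trace_biasOp_mul_self [Fintype n] (f : 𝒳 → Bool) :
    (biasOp PX ρ f * biasOp PX ρ f).trace.re =
      ∑ x, ∑ y, PX x * PX y * (boolSign (f x) * boolSign (f y)) * (ρ x * ρ y).trace.re := by
  simp only [biasOp, sum_mul_sum, Matrix.smul_mul, Matrix.mul_smul, smul_smul, Matrix.trace_sum,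
    Matrix.trace_smul, Complex.re_sum, Complex.smul_re, smul_eq_mul]
  exact sum_congr rfl fun x _ => sum_congr rfl fun y _ => by ring

lemma sum_mul_boolSign_mul_boolSign_nonpos [DecidableEq 𝒳] {PF : (𝒳 → Bool) → ℝ}
    (hPF1 : ∑ f, PF f = 1) {x y : 𝒳}
    (hcoll : ∑ f ∈ univ.filter (fun f => f x = f y), PF f ≤ 1 / 2) :
    ∑ f, PF f * (boolSign (f x) * boolSign (f y)) ≤ 0 := by
  have hsplit := sum_filter_add_sum_filter_not univ (fun f => f x = f y) PF
  simp only [boolSign_mul_boolSign, mul_ite, mul_one, mul_neg_one]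
  rw [sum_ite, sum_neg_distrib]
  linarith

lemma sum_mul_re_trace_biasOp_mul_self_le [DecidableEq 𝒳] [Fintype n] [DecidableEq n]
    {PF : (𝒳 → Bool) → ℝ}
    (hPX0 : ∀ x, 0 ≤ PX x) (hPF1 : ∑ f, PF f = 1)
    (hFuniv : ∀ x x' : 𝒳, x ≠ x' → ∑ f ∈ univ.filter (fun f => f x = f x'), PF f ≤ 1 / 2)
    (hρ : ∀ x, (ρ x).PosSemidef) (hρt : ∀ x, (ρ x).trace = 1) :
    ∑ f, PF f * (biasOp PX ρ f * biasOp PX ρ f).trace.re ≤ ∑ x, PX x ^ 2 := by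
  have hswap : ∑ f, PF f * (biasOp PX ρ f * biasOp PX ρ f).trace.re =
      ∑ x, ∑ y, PX x * PX y * (ρ x * ρ y).trace.re *
        ∑ f, PF f * (boolSign (f x) * boolSign (f y)) := by
    simp_rw [re_trace_biasOp_mul_self, mul_sum]
    rw [sum_comm]
    refine sum_congr rfl fun x _ => ?_
    rw [sum_comm]
    exact sum_congr rfl fun y _ => sum_congr rfl fun f _ => by ring
  have hterm (x y : 𝒳) : PX x * PX y * (ρ x * ρ y).trace.re *
      ∑ f, PF f * (boolSign (f x) * boolSign (f y)) ≤ if x = y then PX x ^ 2 else 0 := by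
    rcases eq_or_ne x y with rfl | hxy
    · have hpure : (ρ x * ρ x).trace.re ≤ 1 := by
        simpa [hρt x] using (hρ x).re_trace_mul_self_le
      simp only [boolSign_mul_boolSign, if_true, mul_one, hPF1]
      simpa [sq] using mul_le_mul_of_nonneg_left hpure (mul_self_nonneg (PX x))
    · rw [if_neg hxy]
      exact mul_nonpos_of_nonneg_of_nonpos
        (mul_nonneg (mul_nonneg (hPX0 x) (hPX0 y)) ((hρ x).re_trace_mul_nonneg (hρ y)))
        (sum_mul_boolSign_mul_boolSign_nonpos hPF1 (hFuniv x y hxy))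
  rw [hswap]
  calc _ ≤ ∑ x, ∑ y, if x = y then PX x ^ 2 else 0 :=
        sum_le_sum fun x _ => sum_le_sum fun y _ => hterm x y
    _ = ∑ x, PX x ^ 2 := by simp

end Hashing

lemma dQuant_le_sqrt_re_trace_biasOp_mul_self {d : ℕ} {𝒳 : Type} [Fintype 𝒳] {PX : 𝒳 → ℝ}
    {ρ : 𝒳 → Matrix (Fin d) (Fin d) ℂ} (hPX0 : ∀ x, 0 ≤ PX x)
    (hρ : ∀ x, (ρ x).PosSemidef) (f : 𝒳 → Bool) :
    dQuant PX ρ f ≤ 1 / 2 * √d * √(biasOp PX ρ f * biasOp PX ρ f).trace.re := by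
  refine Real.sSup_le ?_ (by positivity)
  rintro r ⟨M, rfl⟩
  have hΔ := isHermitian_biasOp (PX := PX) (fun x => (hρ x).1) f
  rw [dCond_bool fun w z => sum_nonneg fun x _ =>
    mul_nonneg (hPX0 x) ((M.psd w).re_trace_mul_nonneg (hρ x))]
  simp_rw [← re_trace_mul_biasOp, ← sum_div]
  calc (∑ w, |(M.E w * biasOp PX ρ f).trace.re|) / 2
      ≤ (∑ i, |hΔ.eigenvalues i|) / 2 := by
        gcongr; exact hΔ.sum_abs_re_trace_mul_le_sum_abs_eigenvalues M.psd M.sum_eq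
    _ ≤ (√(Fintype.card (Fin d)) * √(biasOp PX ρ f * biasOp PX ρ f).trace.re) / 2 := by
        gcongr; exact hΔ.sum_abs_eigenvalues_le_sqrt_card_mul
    _ = 1 / 2 * √d * √(biasOp PX ρ f * biasOp PX ρ f).trace.re := by
        rw [Fintype.card_fin]; ring

theorem cor_binhash_general {d : ℕ} {𝒳 : Type} [Fintype 𝒳] [DecidableEq 𝒳]
    (PX : 𝒳 → ℝ) (hPX0 : ∀ x, 0 ≤ PX x)
    (PF : (𝒳 → Bool) → ℝ) (hPF0 : ∀ f, 0 ≤ PF f) (hPF1 : ∑ f, PF f = 1)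
    (hFuniv : ∀ x x' : 𝒳, x ≠ x' →
      ∑ f ∈ univ.filter (fun f => f x = f x'), PF f ≤ 1 / 2)
    (ρ : 𝒳 → Matrix (Fin d) (Fin d) ℂ)
    (hρ : ∀ x, (ρ x).PosSemidef) (hρt : ∀ x, (ρ x).trace = 1) :
    ∑ f, PF f * dQuant PX ρ f
      ≤ (1 / 2) * Real.sqrt d * Real.sqrt (∑ x, PX x ^ 2) := by
  set q : (𝒳 → Bool) → ℝ := fun f => (biasOp PX ρ f * biasOp PX ρ f).trace.re
  have hq (f : 𝒳 → Bool) : 0 ≤ q f :=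
    (isHermitian_biasOp (fun x => (hρ x).1) f).re_trace_mul_self_nonneg
  calc ∑ f, PF f * dQuant PX ρ f
      ≤ ∑ f, PF f * (1 / 2 * √d * √(q f)) :=
        sum_le_sum fun f _ => mul_le_mul_of_nonneg_left
          (dQuant_le_sqrt_re_trace_biasOp_mul_self hPX0 hρ f) (hPF0 f)
    _ = 1 / 2 * √d * ∑ f, PF f * √(q f) := by
        rw [mul_sum]; exact sum_congr rfl fun f _ => by ring
    _ ≤ 1 / 2 * √d * √(∑ f, PF f * q f) := by
        gcongr
        exact sum_mul_sqrt_le_sqrt_sum_mul univ (fun f _ => hPF0 f) hPF1 (fun f _ => hq f)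
    _ ≤ 1 / 2 * √d * √(∑ x, PX x ^ 2) := by
        gcongr
        exact sum_mul_re_trace_biasOp_mul_self_le hPX0 hPF1 hFuniv hρ hρt

/-- **Corollary `cor:binhash`**: for a random variable `X` with distribution `PX` on a
finite set `𝒳` and a two-universal random predicate `F` (distribution `PF` on functions
`𝒳 → {0,1}`, independent of `X`, with `Pr[F(x) = F(x')] ≤ 1/2` for `x ≠ x'`), and any
family `{ρ_x}` of density matrices on `ℂ^d`,
`d(F(X)|⟨ρ_X,F⟩) ≤ (1/2)·√d·√(∑_x P_X(x)²)`. -/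
theorem cor_binhash {d : ℕ} {𝒳 : Type} [Fintype 𝒳] [DecidableEq 𝒳]
    (PX : 𝒳 → ℝ) (hPX0 : ∀ x, 0 ≤ PX x) (hPX1 : ∑ x, PX x = 1)
    (PF : (𝒳 → Bool) → ℝ) (hPF0 : ∀ f, 0 ≤ PF f) (hPF1 : ∑ f, PF f = 1)
    (hFuniv : ∀ x x' : 𝒳, x ≠ x' →
      ∑ f ∈ univ.filter (fun f => f x = f x'), PF f ≤ 1 / 2)
    (ρ : 𝒳 → Matrix (Fin d) (Fin d) ℂ)
    (hρ : ∀ x, (ρ x).PosSemidef) (hρt : ∀ x, (ρ x).trace = 1) :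
    ∑ f, PF f * dQuant PX ρ f
      ≤ (1 / 2) * Real.sqrt d * Real.sqrt (∑ x, PX x ^ 2) :=
  cor_binhash_general PX hPX0 PF hPF0 hPF1 hFuniv ρ hρ hρt
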